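/- arXiv:2111.07618 — 2 statements merged into one kernel-verified Lean document; each statement's English description precedes it below -/
import Mathlib

section
/- Let g : ℝⁿ → ℝ be differentiable with L-Lipschitz gradient, h₁ : ℝⁿ → ℝ ∪ {+∞} a proper lower semicontinuous convex function, h₂ : ℝⁿ → ℝ a continuous convex function, and f = g + h₁ − h₂. Suppose sequences {x_k}, {x_k⁺}, {ξ_k}, {r_k}, {B_k}, {η_k} satisfy, for every k: h₁(x_k) and h₁(x_k⁺) are finite; ξ_k ∈ ∂h₂(x_k); B_k is a symmetric matrix with m‖u‖² ≤ uᵀB_k u ≤ M‖u‖² for all u (with constants 0 < m ≤ M); d_k = x_k⁺ − x_k; r_k − (∇g(x_k) − ξ_k) − B_k d_k ∈ ∂h₁(x_k⁺); ‖r_k‖_{B_k⁻¹} ≤ (1 − θ_k)‖d_k‖_{B_k} with θ_k ∈ [θ̄, 1] for a constant θ̄ ∈ (0,1]; x_{k+1} = x_k + η_k d_k with η_k ∈ [η̄, 1] for a constant η̄ > 0; and f(x_{k+1}) ≤ f(x_k) + δ η_k ((∇g(x_k) − ξ_k)ᵀ d_k + h₁(x_k⁺) − h₁(x_k)) with δ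 ∈ (0,1). If f is bounded below and {x_k} is bounded, then every accumulation point x̄ of {x_k} is a critical point of f, i.e., there exist v ∈ ∂h₁(x̄) and w ∈ ∂h₂(x̄) such that ∇g(x̄) + v − w = 0. -/
/-!
The subgradient inequality for `h₁` at `x_k⁺`, tested at `x_k`, together with the inexactness
criterion (Cauchy–Schwarz in the `B_k`-geometry) bounds the model decrease
`⟪∇g(x_k) - ξ_k, d_k⟫ + h₁(x_k⁺) - h₁(x_k)` by `-θ̄ m ‖d_k‖²`. The line search then makes `f(x_k)`
drop by at least `δ η̄ θ̄ m ‖d_k‖²`; as `f` is bounded below, `∑ ‖d_k‖² < ∞`, so `d_k → 0` and,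
by the uniform bounds on `B_k`, `r_k → 0` and `B_k d_k → 0`. Along a subsequence `x_k → x̄` the
subgradients `ξ_k` stay bounded (`h₂` is bounded near `x̄`), so a further subsequence has
`ξ_k → w`. Since `x_k⁺ → x̄` as well, closedness of the subdifferential graphs of the continuous
`h₂` and of the lower semicontinuous `h₁` gives `w ∈ ∂h₂(x̄)` and `w - ∇g(x̄) ∈ ∂h₁(x̄)`.
-/

open Matrix Filter Topology RealInnerProductSpace

noncomputable section

/-- `n`-dimensional Euclidean space. -/
abbrev Euc (n : ℕ) := EuclideanSpace ℝ (Fin n)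

/-- `v` is a subgradient of the extended-real-valued convex function `φ` at `x`. -/
def ESubgradAt {n : ℕ} (φ : Euc n → EReal) (v x : Euc n) : Prop :=
  ∀ y : Euc n, φ x + ((⟪v, y - x⟫ : ℝ) : EReal) ≤ φ y

/-- `v` is a subgradient of the real-valued convex function `φ` at `x`. -/
def RSubgradAt {n : ℕ} (φ : Euc n → ℝ) (v x : Euc n) : Prop :=
  ∀ y : Euc n, φ x + ⟪v, y - x⟫ ≤ φ y

/-- Convexity of an extended-real-valued function. -/
def EConvexF {n : ℕ} (φ : Euc n → EReal) : Prop :=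
  ∀ x y : Euc n, ∀ a b : ℝ, 0 ≤ a → 0 ≤ b → a + b = 1 →
    φ (a • x + b • y) ≤ (a : EReal) * φ x + (b : EReal) * φ y

/-- Properness of an extended-real-valued function: never `⊥` and finite somewhere. -/
def ProperF {n : ℕ} (φ : Euc n → EReal) : Prop :=
  (∀ x, φ x ≠ ⊥) ∧ (∃ x, φ x ≠ ⊤)

/-- The quadratic form `uᵀ B u`. -/
def quadF {n : ℕ} (B : Matrix (Fin n) (Fin n) ℝ) (u : Euc n) : ℝ :=
  ⟪u, (Matrix.toEuclideanLin B) u⟫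

/-- The scaled norm `‖u‖_B = √(uᵀ B u)`. -/
def MNorm {n : ℕ} (B : Matrix (Fin n) (Fin n) ℝ) (u : Euc n) : ℝ :=
  Real.sqrt (quadF B u)

/-- The objective `f = g + h₁ - h₂`. -/
def fObj {n : ℕ} (g : Euc n → ℝ) (h₁ : Euc n → EReal) (h₂ : Euc n → ℝ) (x : Euc n) : EReal :=
  (g x : EReal) + h₁ x - (h₂ x : EReal)

namespace Matrix

variable {n : ℕ} {B : Matrix (Fin n) (Fin n) ℝ} {m M : ℝ}

lemma quadF_nonneg_of_lower (hm : 0 ≤ m) (hlow : ∀ u : Euc n, m * ‖u‖ ^ 2 ≤ quadF B u)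
    (u : Euc n) : 0 ≤ quadF B u :=
  (by positivity : 0 ≤ m * ‖u‖ ^ 2).trans (hlow u)

lemma IsSymm.inner_toEuclideanLin_comm (hB : B.IsSymm) (u v : Euc n) :
    ⟪toEuclideanLin B u, v⟫ = ⟪u, toEuclideanLin B v⟫ :=
  isSymmetric_toEuclideanLin_iff.mpr
    (by rwa [IsHermitian, conjTranspose_eq_transpose_of_trivial]) u v

lemma IsSymm.quadF_add_smul (hB : B.IsSymm) (u v : Euc n) (t : ℝ) :
    quadF B (u + t • v) = quadF B v * (t * t) + 2 * ⟪u, toEuclideanLin B v⟫ * t + quadF B u := by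
  have hvu : ⟪v, toEuclideanLin B u⟫ = ⟪u, toEuclideanLin B v⟫ := by
    rw [← hB.inner_toEuclideanLin_comm, real_inner_comm]
  simp only [quadF, map_add, map_smul, inner_add_left, inner_add_right, real_inner_smul_left,
    real_inner_smul_right, hvu]
  ring

lemma IsSymm.inner_toEuclideanLin_sq_le (hB : B.IsSymm) (hpos : ∀ u, 0 ≤ quadF B u)
    (u v : Euc n) : ⟪u, toEuclideanLin B v⟫ ^ 2 ≤ quadF B u * quadF B v := by
  have h := discrim_le_zero fun t => (hB.quadF_add_smul u v t ▸ hpos (u + t • v))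
  rw [discrim] at h
  nlinarith

lemma IsSymm.inner_le_MNorm_mul_MNorm (hB : B.IsSymm) (hpos : ∀ u, 0 ≤ quadF B u)
    (u v : Euc n) : ⟪u, toEuclideanLin B v⟫ ≤ MNorm B u * MNorm B v := by
  rw [MNorm, MNorm, ← Real.sqrt_mul (hpos u)]
  exact (le_abs_self _).trans (Real.abs_le_sqrt (hB.inner_toEuclideanLin_sq_le hpos u v))

lemma IsSymm.norm_toEuclideanLin_le (hB : B.IsSymm) (hM : 0 ≤ M)
    (hpos : ∀ u, 0 ≤ quadF B u) (hup : ∀ u, quadF B u ≤ M * ‖u‖ ^ 2) (u : Euc n) :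
    ‖toEuclideanLin B u‖ ≤ M * ‖u‖ := by
  set w := toEuclideanLin B u
  have hcs := hB.inner_toEuclideanLin_sq_le hpos w u
  rw [real_inner_self_eq_norm_sq] at hcs
  have h : (‖w‖ ^ 2) ^ 2 ≤ (M * ‖w‖ ^ 2) * (M * ‖u‖ ^ 2) :=
    hcs.trans (mul_le_mul (hup w) (hup u) (hpos u) (by positivity))
  have h' : ‖w‖ ^ 2 ≤ (M * ‖u‖) ^ 2 := by
    rcases (norm_nonneg w).eq_or_lt with h0 | h0
    · rw [← h0, sq, zero_mul]; positivity
    · nlinarith [pow_pos h0 2]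
  exact pow_le_pow_iff_left₀ (norm_nonneg _) (by positivity) two_ne_zero |>.mp h'

lemma isUnit_of_quadF_lower (hm : 0 < m) (hlow : ∀ u : Euc n, m * ‖u‖ ^ 2 ≤ quadF B u) :
    IsUnit B := by
  refine mulVec_injective_iff_isUnit.mp fun v₁ v₂ h => ?_
  set u : Euc n := WithLp.toLp 2 (v₁ - v₂)
  have hBu : toEuclideanLin B u = 0 := by
    rw [toLpLin_apply, mulVec_sub, h, sub_self]; rfl
  have hu : ‖u‖ ^ 2 ≤ 0 := by
    have := hlow u
    rw [quadF, hBu, inner_zero_right] at this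
    nlinarith
  have : u = 0 := norm_eq_zero.mp (by nlinarith [norm_nonneg u])
  exact sub_eq_zero.mp (congrArg WithLp.ofLp this)

lemma toEuclideanLin_inv_apply_toEuclideanLin (hB : IsUnit B) (u : Euc n) :
    toEuclideanLin B⁻¹ (toEuclideanLin B u) = u := by
  simp only [toLpLin_apply, mulVec_mulVec,
    nonsing_inv_mul _ ((isUnit_iff_isUnit_det B).mp hB), one_mulVec]

lemma toEuclideanLin_toEuclideanLin_inv_apply (hB : IsUnit B) (r : Euc n) :
    toEuclideanLin B (toEuclideanLin B⁻¹ r) = r := by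
  simp only [toLpLin_apply, mulVec_mulVec,
    mul_nonsing_inv _ ((isUnit_iff_isUnit_det B).mp hB), one_mulVec]

lemma quadF_inv_toEuclideanLin (hB : IsUnit B) (u : Euc n) :
    quadF B⁻¹ (toEuclideanLin B u) = quadF B u := by
  rw [quadF, quadF, toEuclideanLin_inv_apply_toEuclideanLin hB, real_inner_comm]

lemma MNorm_inv_toEuclideanLin (hB : IsUnit B) (u : Euc n) :
    MNorm B⁻¹ (toEuclideanLin B u) = MNorm B u := by
  rw [MNorm, MNorm, quadF_inv_toEuclideanLin hB]

lemma IsSymm.inner_le_of_MNorm_inv_le (hB : B.IsSymm) (hunit : IsUnit B)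
    (hpos : ∀ u, 0 ≤ quadF B u) {r d : Euc n} {s : ℝ} (h : MNorm B⁻¹ r ≤ s * MNorm B d) :
    ⟪r, d⟫ ≤ s * quadF B d := by
  obtain ⟨u, rfl⟩ : ∃ u, toEuclideanLin B u = r :=
    ⟨_, toEuclideanLin_toEuclideanLin_inv_apply hunit r⟩
  rw [MNorm_inv_toEuclideanLin hunit] at h
  calc ⟪toEuclideanLin B u, d⟫ = ⟪u, toEuclideanLin B d⟫ := hB.inner_toEuclideanLin_comm u d
    _ ≤ MNorm B u * MNorm B d := hB.inner_le_MNorm_mul_MNorm hpos u d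
    _ ≤ s * MNorm B d * MNorm B d := mul_le_mul_of_nonneg_right h (Real.sqrt_nonneg _)
    _ = s * quadF B d := by rw [mul_assoc, MNorm, Real.mul_self_sqrt (hpos d)]

lemma IsSymm.norm_le_of_MNorm_inv_le (hB : B.IsSymm) (hm : 0 < m) (hmM : m ≤ M)
    (hbound : ∀ u, m * ‖u‖ ^ 2 ≤ quadF B u ∧ quadF B u ≤ M * ‖u‖ ^ 2)
    {r d : Euc n} {s : ℝ} (h : MNorm B⁻¹ r ≤ s * MNorm B d) (hs : s ≤ 1) :
    ‖r‖ ≤ √(M ^ 3 / m) * ‖d‖ := by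
  replace h := h.trans (mul_le_of_le_one_left (Real.sqrt_nonneg _) hs)
  have hpos := quadF_nonneg_of_lower hm.le fun u => (hbound u).1
  have hunit := isUnit_of_quadF_lower hm fun u => (hbound u).1
  obtain ⟨u, rfl⟩ : ∃ u, toEuclideanLin B u = r :=
    ⟨_, toEuclideanLin_toEuclideanLin_inv_apply hunit r⟩
  rw [MNorm_inv_toEuclideanLin hunit, MNorm, MNorm, Real.sqrt_le_sqrt_iff (hpos d)] at h
  have hu : m * ‖u‖ ^ 2 ≤ M * ‖d‖ ^ 2 := ((hbound u).1.trans h).trans (hbound d).2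
  have hBu := hB.norm_toEuclideanLin_le (hm.le.trans hmM) hpos (fun u => (hbound u).2) u
  have hsq : ‖toEuclideanLin B u‖ ^ 2 ≤ M ^ 3 / m * ‖d‖ ^ 2 :=
    calc ‖toEuclideanLin B u‖ ^ 2 ≤ (M * ‖u‖) ^ 2 := pow_le_pow_left₀ (norm_nonneg _) hBu 2
      _ = M ^ 2 / m * (m * ‖u‖ ^ 2) := by field_simp
      _ ≤ M ^ 2 / m * (M * ‖d‖ ^ 2) := by gcongr
      _ = M ^ 3 / m * ‖d‖ ^ 2 := by ring
  calc ‖toEuclideanLin B u‖ ≤ √(M ^ 3 / m * ‖d‖ ^ 2) := by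
        simpa using Real.abs_le_sqrt hsq
    _ = √(M ^ 3 / m) * ‖d‖ := by rw [Real.sqrt_mul' _ (sq_nonneg _), Real.sqrt_sq (norm_nonneg _)]

variable {ι : Type*} {l : Filter ι} {B : ι → Matrix (Fin n) (Fin n) ℝ} {r d : ι → Euc n}

lemma tendsto_toEuclideanLin_apply_zero (hB : ∀ i, (B i).IsSymm) (hm : 0 < m) (hmM : m ≤ M)
    (hbound : ∀ i u, m * ‖u‖ ^ 2 ≤ quadF (B i) u ∧ quadF (B i) u ≤ M * ‖u‖ ^ 2)
    (hd : Tendsto d l (𝓝 0)) : Tendsto (fun i => toEuclideanLin (B i) (d i)) l (𝓝 0) := by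
  refine squeeze_zero_norm (fun i => (hB i).norm_toEuclideanLin_le (hm.le.trans hmM)
    (quadF_nonneg_of_lower hm.le fun u => (hbound i u).1) (fun u => (hbound i u).2) _) ?_
  simpa using hd.norm.const_mul M

lemma tendsto_zero_of_MNorm_inv_le (hB : ∀ i, (B i).IsSymm) (hm : 0 < m) (hmM : m ≤ M)
    (hbound : ∀ i u, m * ‖u‖ ^ 2 ≤ quadF (B i) u ∧ quadF (B i) u ≤ M * ‖u‖ ^ 2) {s : ι → ℝ}
    (hr : ∀ i, MNorm (B i)⁻¹ (r i) ≤ s i * MNorm (B i) (d i)) (hs : ∀ i, s i ≤ 1)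
    (hd : Tendsto d l (𝓝 0)) : Tendsto r l (𝓝 0) := by
  refine squeeze_zero_norm
    (fun i => (hB i).norm_le_of_MNorm_inv_le hm hmM (hbound i) (hr i) (hs i)) ?_
  simpa using hd.norm.const_mul _

end Matrix

section Subgradient

variable {n : ℕ}

lemma ESubgradAt.toReal_add_inner_le {φ : Euc n → EReal} {v x y : Euc n}
    (h : ESubgradAt φ v x) (hbot : ∀ z, φ z ≠ ⊥) (hx : φ x ≠ ⊤) (hy : φ y ≠ ⊤) :
    (φ x).toReal + ⟪v, y - x⟫ ≤ (φ y).toReal := by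
  have := h y
  rw [← EReal.coe_toReal hx (hbot x), ← EReal.coe_toReal hy (hbot y)] at this
  exact_mod_cast this

/-- For fixed `y`, the pairs `(x, v)` satisfying the subgradient inequality at `y` form a
sublevel set of a lower semicontinuous function of `(x, v)`. -/
lemma ESubgradAt.of_tendsto {φ : Euc n → EReal} (hφ : LowerSemicontinuous φ)
    {ι : Type*} {l : Filter ι} [l.NeBot] {x v : ι → Euc n} {x₀ v₀ : Euc n}
    (hx : Tendsto x l (𝓝 x₀)) (hv : Tendsto v l (𝓝 v₀)) (h : ∀ i, ESubgradAt φ (v i) (x i)) :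
    ESubgradAt φ v₀ x₀ := by
  intro y
  have hlsc : LowerSemicontinuous fun p : Euc n × Euc n =>
      φ p.1 + ((⟪p.2, y - p.1⟫ : ℝ) : EReal) :=
    (hφ.comp continuous_fst).add'
      (continuous_coe_real_ereal.comp (by fun_prop)).lowerSemicontinuous
      fun _ => EReal.continuousAt_add (Or.inr (EReal.coe_ne_bot _)) (Or.inr (EReal.coe_ne_top _))
  exact (hlsc.isClosed_preimage (φ y)).mem_of_tendsto (hx.prodMk_nhds hv)
    (Eventually.of_forall fun i => h i y)

lemma RSubgradAt.of_tendsto {φ : Euc n → ℝ} (hφ : Continuous φ)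
    {ι : Type*} {l : Filter ι} [l.NeBot] {x v : ι → Euc n} {x₀ v₀ : Euc n}
    (hx : Tendsto x l (𝓝 x₀)) (hv : Tendsto v l (𝓝 v₀)) (h : ∀ i, RSubgradAt φ (v i) (x i)) :
    RSubgradAt φ v₀ x₀ := fun y =>
  (isClosed_le (f := fun p : Euc n × Euc n => φ p.1 + ⟪p.2, y - p.1⟫) (by fun_prop)
    continuous_const).mem_of_tendsto (hx.prodMk_nhds hv) (Eventually.of_forall fun i => h i y)

/-- Test the subgradient inequality at `x + ξ / ‖ξ‖`. -/
lemma RSubgradAt.norm_le {φ : Euc n → ℝ} {ξ x : Euc n} {C : ℝ} (h : RSubgradAt φ ξ x)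
    (hC : ∀ y ∈ Metric.closedBall x 1, |φ y| ≤ C) : ‖ξ‖ ≤ 2 * C := by
  set y := x + ‖ξ‖⁻¹ • ξ
  have hy : y ∈ Metric.closedBall x 1 := by
    rw [Metric.mem_closedBall, dist_eq_norm, add_sub_cancel_left, norm_smul, norm_inv, norm_norm]
    exact inv_mul_le_one
  have hinner : ⟪ξ, y - x⟫ = ‖ξ‖ := by
    rw [add_sub_cancel_left, real_inner_smul_right, real_inner_self_eq_norm_sq, sq, ← mul_assoc,
      inv_mul_mul_self]
  have hsub := h y
  rw [hinner] at hsub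
  have hx := abs_le.mp (hC x (Metric.mem_closedBall_self zero_le_one))
  have hy := abs_le.mp (hC y hy)
  linarith [hx.1, hy.2]

lemma RSubgradAt.exists_subseq_tendsto {φ : Euc n → ℝ} (hφ : Continuous φ) {x ξ : ℕ → Euc n}
    {x₀ : Euc n} (hx : Tendsto x atTop (𝓝 x₀)) (hξ : ∀ i, RSubgradAt φ (ξ i) (x i)) :
    ∃ w, ∃ ψ : ℕ → ℕ, StrictMono ψ ∧ Tendsto (ξ ∘ ψ) atTop (𝓝 w) := by
  obtain ⟨R, hR⟩ := isBounded_iff_forall_norm_le.mp (Metric.isBounded_range_of_tendsto _ hx)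
  obtain ⟨C, hC⟩ := (isCompact_closedBall (0 : Euc n) (R + 1)).exists_bound_of_continuousOn
    hφ.continuousOn
  have hξC i : ξ i ∈ Metric.closedBall 0 (2 * C) := by
    refine mem_closedBall_zero_iff.mpr ((hξ i).norm_le fun y hy => hC y ?_)
    rw [Metric.mem_closedBall, dist_eq_norm] at hy
    rw [mem_closedBall_zero_iff]
    calc ‖y‖ ≤ ‖x i‖ + ‖y - x i‖ := norm_le_insert' y (x i)
      _ ≤ R + 1 := add_le_add (hR _ ⟨i, rfl⟩) hy
  obtain ⟨w, -, ψ, hψ, hξψ⟩ := tendsto_subseq_of_bounded Metric.isBounded_closedBall hξC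
  exact ⟨w, ψ, hψ, hξψ⟩

end Subgradient

lemma summable_of_sufficient_decrease {F s : ℕ → ℝ} {c F₀ : ℝ} (hc : 0 < c)
    (hs : ∀ k, 0 ≤ s k) (hF : ∀ k, F (k + 1) + c * s k ≤ F k) (hlow : ∀ k, F₀ ≤ F k) :
    Summable s := by
  refine summable_of_sum_range_le (c := (F 0 - F₀) / c) hs fun N => ?_
  rw [le_div_iff₀' hc, Finset.mul_sum]
  calc ∑ i ∈ Finset.range N, c * s i ≤ ∑ i ∈ Finset.range N, (F i - F (i + 1)) :=
        Finset.sum_le_sum fun i _ => by linarith [hF i]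
    _ = F 0 - F N := Finset.sum_range_sub' F N
    _ ≤ F 0 - F₀ := by linarith [hlow N]

lemma add_mul_le_of_armijo {F F' Δ δ η ηbar q : ℝ} (hls : F' ≤ F + δ * η * Δ) (hΔ : Δ ≤ -q)
    (hδ : 0 ≤ δ) (hηbar : 0 ≤ ηbar) (hη : ηbar ≤ η) (hq : 0 ≤ q) : F' + δ * ηbar * q ≤ F := by
  have h₁ : δ * η * Δ ≤ δ * η * -q := mul_le_mul_of_nonneg_left hΔ (mul_nonneg hδ (hηbar.trans hη))
  have h₂ : δ * ηbar * q ≤ δ * η * q := by gcongr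
  linarith

lemma tendsto_zero_of_summable_norm_sq {E : Type*} [SeminormedAddCommGroup E] {d : ℕ → E}
    (h : Summable fun k => ‖d k‖ ^ 2) : Tendsto d atTop (𝓝 0) := by
  refine squeeze_zero_norm (fun k => (Real.sqrt_sq (norm_nonneg (d k))).ge) ?_
  simpa using h.tendsto_atTop_zero.sqrt

section ProximalNewton

variable {n : ℕ}

lemma fObj_eq_coe {g : Euc n → ℝ} {h₁ : Euc n → EReal} {h₂ : Euc n → ℝ} {x : Euc n}
    (hx : h₁ x ≠ ⊤) (hx' : h₁ x ≠ ⊥) :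
    fObj g h₁ h₂ x = ((g x + (h₁ x).toReal - h₂ x : ℝ) : EReal) := by
  rw [fObj, ← EReal.coe_toReal hx hx']
  rfl

lemma model_decrease_le {h₁ : Euc n → EReal} {B : Matrix (Fin n) (Fin n) ℝ}
    {m θ θbar : ℝ} {x xp d r G : Euc n} (hB : B.IsSymm) (hm : 0 < m)
    (hlow : ∀ u, m * ‖u‖ ^ 2 ≤ quadF B u)
    (hbot : ∀ z, h₁ z ≠ ⊥) (hx : h₁ x ≠ ⊤) (hxp : h₁ xp ≠ ⊤) (hd : d = xp - x)
    (hsub : ESubgradAt h₁ (r - G - toEuclideanLin B d) xp)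
    (hres : MNorm B⁻¹ r ≤ (1 - θ) * MNorm B d) (hθbar : 0 ≤ θbar) (hθ : θbar ≤ θ) :
    ⟪G, d⟫ + (h₁ xp).toReal - (h₁ x).toReal ≤ -(θbar * m * ‖d‖ ^ 2) := by
  have hpos := quadF_nonneg_of_lower hm.le hlow
  have hsub' := hsub.toReal_add_inner_le hbot hxp hx
  have hxd : x - xp = -d := by rw [hd]; abel
  have hinner : ⟪r - G - toEuclideanLin B d, -d⟫ = ⟪G, d⟫ - ⟪r, d⟫ + quadF B d := by
    simp only [quadF, inner_sub_left, inner_neg_right, real_inner_comm (toEuclideanLin B d) d]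
    ring
  rw [hxd, hinner] at hsub'
  have hrd := hB.inner_le_of_MNorm_inv_le (isUnit_of_quadF_lower hm hlow) hpos hres
  have hθq : θbar * (m * ‖d‖ ^ 2) ≤ θ * quadF B d :=
    mul_le_mul hθ (hlow d) (by positivity) (hθbar.trans hθ)
  linarith

end ProximalNewton

theorem inexact_proximal_DC_Newton_accumulation_critical_general
    {n : ℕ} (L m M δ θbar ηbar : ℝ)
    (g : Euc n → ℝ) (g' : Euc n → Euc n)
    (h₁ : Euc n → EReal) (h₂ : Euc n → ℝ)
    (x xp ξ r d : ℕ → Euc n) (B : ℕ → Matrix (Fin n) (Fin n) ℝ)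
    (θ η : ℕ → ℝ)
    (hLip : ∀ u v : Euc n, ‖g' u - g' v‖ ≤ L * ‖u - v‖)
    (hprop : ProperF h₁) (hlsc : LowerSemicontinuous h₁)
    (hh₂cont : Continuous h₂)
    (hm : 0 < m) (hmM : m ≤ M)
    (hθbar : 0 < θbar)
    (hδ0 : 0 < δ) (hηbar : 0 < ηbar)
    (hfin : ∀ k, h₁ (x k) ≠ ⊤) (hfinp : ∀ k, h₁ (xp k) ≠ ⊤)
    (hξ : ∀ k, RSubgradAt h₂ (ξ k) (x k))
    (hBsymm : ∀ k, (B k).IsSymm)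
    (hBbound : ∀ k, ∀ u : Euc n,
      m * ‖u‖ ^ 2 ≤ quadF (B k) u ∧ quadF (B k) u ≤ M * ‖u‖ ^ 2)
    (hd : ∀ k, d k = xp k - x k)
    (hr : ∀ k, ESubgradAt h₁
      (r k - (g' (x k) - ξ k) - (Matrix.toEuclideanLin (B k)) (d k)) (xp k))
    (hres : ∀ k, MNorm (B k)⁻¹ (r k) ≤ (1 - θ k) * MNorm (B k) (d k))
    (hθ : ∀ k, θbar ≤ θ k ∧ θ k ≤ 1)
    (hη : ∀ k, ηbar ≤ η k ∧ η k ≤ 1)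
    (hls : ∀ k, fObj g h₁ h₂ (x (k + 1)) ≤ fObj g h₁ h₂ (x k) +
      ((δ * η k * (⟪g' (x k) - ξ k, d k⟫ + (h₁ (xp k)).toReal - (h₁ (x k)).toReal) : ℝ) : EReal))
    (hbdd : ∃ c : ℝ, ∀ y : Euc n, (c : EReal) ≤ fObj g h₁ h₂ y) :
    ∀ xbar : Euc n,
      (∃ φ : ℕ → ℕ, StrictMono φ ∧ Tendsto (fun i => x (φ i)) atTop (𝓝 xbar)) →
      ∃ v w : Euc n, ESubgradAt h₁ v xbar ∧ RSubgradAt h₂ w xbar ∧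
        g' xbar + v - w = 0 := by
  rintro xbar ⟨φ, hφ, hxφ⟩
  set F : ℕ → ℝ := fun k => g (x k) + (h₁ (x k)).toReal - h₂ (x k)
  have hF k : fObj g h₁ h₂ (x k) = F k := fObj_eq_coe (hfin k) (hprop.1 _)
  have hdesc k : F (k + 1) + δ * ηbar * (θbar * m) * ‖d k‖ ^ 2 ≤ F k := by
    have hlsk := hls k
    rw [hF, hF] at hlsk
    simpa only [mul_assoc] using add_mul_le_of_armijo (by exact_mod_cast hlsk)
      (model_decrease_le (hBsymm k) hm (fun u => (hBbound k u).1) hprop.1 (hfin k) (hfinp k)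
        (hd k) (hr k) (hres k) hθbar.le (hθ k).1) hδ0.le hηbar.le (hη k).1 (by positivity)
  obtain ⟨c, hc⟩ := hbdd
  have hd0 : Tendsto d atTop (𝓝 0) := tendsto_zero_of_summable_norm_sq <|
    summable_of_sufficient_decrease (by positivity) (fun k => by positivity) hdesc
      fun k => by exact_mod_cast (hF k) ▸ hc (x k)
  obtain ⟨w, ψ, hψ, hξσ⟩ := RSubgradAt.exists_subseq_tendsto hh₂cont hxφ fun i => hξ (φ i)
  set σ := φ ∘ ψ
  change Tendsto (fun i => ξ (σ i)) atTop (𝓝 w) at hξσ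
  have hxσ : Tendsto (fun i => x (σ i)) atTop (𝓝 xbar) := hxφ.comp hψ.tendsto_atTop
  have hdσ : Tendsto (fun i => d (σ i)) atTop (𝓝 0) := hd0.comp (hφ.comp hψ).tendsto_atTop
  have hxpσ : Tendsto (fun i => xp (σ i)) atTop (𝓝 xbar) := by simpa [hd] using hxσ.add hdσ
  have hrσ := tendsto_zero_of_MNorm_inv_le (fun i => hBsymm (σ i)) hm hmM
    (fun i => hBbound (σ i)) (fun i => hres (σ i)) (fun i => by linarith [(hθ (σ i)).1]) hdσ
  have hBdσ := tendsto_toEuclideanLin_apply_zero (fun i => hBsymm (σ i)) hm hmM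
    (fun i => hBbound (σ i)) hdσ
  have hg' : Continuous g' :=
    (LipschitzWith.of_dist_le' fun u v => by simpa [dist_eq_norm] using hLip u v).continuous
  have hg'σ : Tendsto (fun i => g' (x (σ i))) atTop (𝓝 (g' xbar)) := (hg'.tendsto xbar).comp hxσ
  refine ⟨w - g' xbar, w, ESubgradAt.of_tendsto hlsc hxpσ ?_ fun i => hr (σ i),
    RSubgradAt.of_tendsto hh₂cont hxσ hξσ fun i => hξ (σ i), by abel⟩
  simpa using (hrσ.sub (hg'σ.sub hξσ)).sub hBdσ

/-- every accumulation point of the sequence generated by the inexact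
proximal DC Newton-type method is a critical point of `f = g + h₁ - h₂`. -/
theorem inexact_proximal_DC_Newton_accumulation_critical
    {n : ℕ} (L m M δ θbar ηbar : ℝ)
    (g : Euc n → ℝ) (g' : Euc n → Euc n)
    (h₁ : Euc n → EReal) (h₂ : Euc n → ℝ)
    (x xp ξ r d : ℕ → Euc n) (B : ℕ → Matrix (Fin n) (Fin n) ℝ)
    (θ η : ℕ → ℝ)
    (hL : 0 ≤ L)
    (hg : ∀ y : Euc n, HasGradientAt g (g' y) y)
    (hLip : ∀ u v : Euc n, ‖g' u - g' v‖ ≤ L * ‖u - v‖)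
    (hprop : ProperF h₁) (hlsc : LowerSemicontinuous h₁) (hconv : EConvexF h₁)
    (hh₂cont : Continuous h₂) (hh₂conv : ConvexOn ℝ Set.univ h₂)
    (hm : 0 < m) (hmM : m ≤ M)
    (hθbar : 0 < θbar) (hθbar1 : θbar ≤ 1)
    (hδ0 : 0 < δ) (hδ1 : δ < 1) (hηbar : 0 < ηbar)
    (hfin : ∀ k, h₁ (x k) ≠ ⊤) (hfinp : ∀ k, h₁ (xp k) ≠ ⊤)
    (hξ : ∀ k, RSubgradAt h₂ (ξ k) (x k))
    (hBsymm : ∀ k, (B k).IsSymm)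
    (hBbound : ∀ k, ∀ u : Euc n,
      m * ‖u‖ ^ 2 ≤ quadF (B k) u ∧ quadF (B k) u ≤ M * ‖u‖ ^ 2)
    (hd : ∀ k, d k = xp k - x k)
    (hr : ∀ k, ESubgradAt h₁
      (r k - (g' (x k) - ξ k) - (Matrix.toEuclideanLin (B k)) (d k)) (xp k))
    (hres : ∀ k, MNorm (B k)⁻¹ (r k) ≤ (1 - θ k) * MNorm (B k) (d k))
    (hθ : ∀ k, θbar ≤ θ k ∧ θ k ≤ 1)
    (hη : ∀ k, ηbar ≤ η k ∧ η k ≤ 1)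
    (hstep : ∀ k, x (k + 1) = x k + η k • d k)
    (hls : ∀ k, fObj g h₁ h₂ (x (k + 1)) ≤ fObj g h₁ h₂ (x k) +
      ((δ * η k * (⟪g' (x k) - ξ k, d k⟫ + (h₁ (xp k)).toReal - (h₁ (x k)).toReal) : ℝ) : EReal))
    (hbdd : ∃ c : ℝ, ∀ y : Euc n, (c : EReal) ≤ fObj g h₁ h₂ y)
    (hxbdd : ∃ R : ℝ, ∀ k, ‖x k‖ ≤ R) :
    ∀ xbar : Euc n,
      (∃ φ : ℕ → ℕ, StrictMono φ ∧ Tendsto (fun i => x (φ i)) atTop (𝓝 xbar)) →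
      ∃ v w : Euc n, ESubgradAt h₁ v xbar ∧ RSubgradAt h₂ w xbar ∧
        g' xbar + v - w = 0 :=
  inexact_proximal_DC_Newton_accumulation_critical_general L m M δ θbar ηbar g g' h₁ h₂ x xp ξ r d B
    θ η hLip hprop hlsc hh₂cont hm hmM hθbar hδ0 hηbar hfin hfinp hξ hBsymm hBbound hd hr hres hθ hη
    hls hbdd
end
end

section
/- Let h₁ : ℝⁿ → ℝ ∪ {+∞} be a proper lower semicontinuous convex function, τ > 0, x̄ ∈ ℝⁿ, and u₁, u₂ ∈ ℝⁿ linearly independent such that B = τI + u₁u₁ᵀ − u₂u₂ᵀ is positive definite. Define ζ(α) = x̄ − (α₁/τ)u₁ + α₂(τI + u₁u₁ᵀ)⁻¹u₂ for α = (α₁, α₂) ∈ ℝ², and define the map 𝓛 : ℝ² → ℝ² by 𝓛(α) = ( u₁ᵀ(x̄ + α₂(τI + u₁u₁ᵀ)⁻¹u₂ − Prox_{(1/τ)h₁}(ζ(α))) + α₁ , u₂ᵀ(x̄ − Prox_{(1/τ)h₁}(ζ(α))) + α₂ ). Then 𝓛(α) = 0 has exactly one solution α* ∈ ℝ². -/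
open Matrix Filter Topology RealInnerProductSpace

noncomputable section

/-- `p` is the proximal point `Prox_{(1/τ)h₁}(y)`, i.e. the minimizer of
`(1/τ)h₁(·) + ½‖· - y‖²`. -/
def IsProxPt {n : ℕ} (τ : ℝ) (h₁ : Euc n → EReal) (y p : Euc n) : Prop :=
  ∀ w : Euc n, ((τ⁻¹ : ℝ) : EReal) * h₁ p + ((‖p - y‖ ^ 2 / 2 : ℝ) : EReal) ≤
    ((τ⁻¹ : ℝ) : EReal) * h₁ w + ((‖w - y‖ ^ 2 / 2 : ℝ) : EReal)

/-- The matrix `τI + u₁u₁ᵀ`. -/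
def Amat {n : ℕ} (τ : ℝ) (u₁ : Euc n) : Matrix (Fin n) (Fin n) ℝ :=
  τ • (1 : Matrix (Fin n) (Fin n) ℝ) + Matrix.vecMulVec (u₁ : Fin n → ℝ) (u₁ : Fin n → ℝ)

/-- The matrix `B = τI + u₁u₁ᵀ - u₂u₂ᵀ`. -/
def Bprox {n : ℕ} (τ : ℝ) (u₁ u₂ : Euc n) : Matrix (Fin n) (Fin n) ℝ :=
  Amat τ u₁ - Matrix.vecMulVec (u₂ : Fin n → ℝ) (u₂ : Fin n → ℝ)

/-- `ζ(α) = x̄ - (α₁/τ)u₁ + α₂(τI + u₁u₁ᵀ)⁻¹u₂`. -/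
def zetaMap {n : ℕ} (τ : ℝ) (u₁ u₂ xb : Euc n) (α : ℝ × ℝ) : Euc n :=
  xb - (α.1 / τ) • u₁ + α.2 • (Matrix.toEuclideanLin (Amat τ u₁)⁻¹) u₂

/-- The semi-smooth map `𝓛 : ℝ² → ℝ²`, where `P = Prox_{(1/τ)h₁}`. -/
def Lmap {n : ℕ} (τ : ℝ) (u₁ u₂ xb : Euc n) (P : Euc n → Euc n) (α : ℝ × ℝ) : ℝ × ℝ :=
  (⟪u₁, xb + α.2 • (Matrix.toEuclideanLin (Amat τ u₁)⁻¹) u₂ - P (zetaMap τ u₁ u₂ xb α)⟫ + α.1,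
   ⟪u₂, xb - P (zetaMap τ u₁ u₂ xb α)⟫ + α.2)

/-- `p` is the scaled proximal point `Prox_{h₁}^{B}(y)`, i.e. the minimizer of
`h₁(·) + ½‖· - y‖_B²`. -/
def IsScaledProxPt {n : ℕ} (B : Matrix (Fin n) (Fin n) ℝ) (h₁ : Euc n → EReal)
    (y p : Euc n) : Prop :=
  ∀ w : Euc n, h₁ p + ((quadF B (p - y) / 2 : ℝ) : EReal) ≤
    h₁ w + ((quadF B (w - y) / 2 : ℝ) : EReal)

/-!
Put `B = τI + u₁u₁ᵀ - u₂u₂ᵀ`. Once `q = Prox_{(1/τ)h₁}(ζ(α))` is fixed, `𝓛(α) = 0` is a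
triangular linear system in `α`, so every root has the form `α = α(q)`, and since
`(τI + u₁u₁ᵀ)⁻¹u₂` solves `τz + (u₁ᵀz)u₁ = u₂`, one computes `τ(ζ(α(q)) - q) = B(x̄ - q)`.
For convex `h₁` and positive semidefinite `M`, `p` minimizes `h₁ + ½‖· - y‖²_M` iff
`M(y - p) ∈ ∂h₁(p)`. Applied to `M = τI` and to `M = B`, this says that `α(q)` is a root iff `q`
is the `B`-scaled proximal point of `x̄`. That point exists, since `h₁` is lower semicontinuous
with an affine minorant and `B` is coercive, and it is unique since `B` is positive definite.
-/

lemma nonpos_of_forall_le_mul {D c : ℝ} (h : ∀ t ∈ Set.Ioc (0 : ℝ) 1, D ≤ t * c) : D ≤ 0 := by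
  have hlim : Tendsto (fun t : ℝ => t * c) (𝓝[>] 0) (𝓝 0) := by
    simpa using ((continuous_mul_const c).tendsto 0).mono_left nhdsWithin_le_nhds
  exact ge_of_tendsto hlim (Filter.mem_of_superset (Ioc_mem_nhdsGT one_pos) h)

lemma EReal.exists_coe_eq {x : EReal} (hb : x ≠ ⊥) (ht : x ≠ ⊤) : ∃ r : ℝ, x = r :=
  ⟨x.toReal, (EReal.coe_toReal ht hb).symm⟩

lemma le_one_add_of_mul_sq_le {a b M r : ℝ} (ha : 0 < a) (hb : 0 ≤ b)
    (h : a * r ^ 2 ≤ b * r + M) : r ≤ 1 + (b + |M|) / a := by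
  rcases le_or_gt r 1 with hr1 | hr1
  · linarith [div_nonneg (add_nonneg hb (abs_nonneg M)) ha.le]
  have hM : M ≤ |M| * r := (le_abs_self M).trans (le_mul_of_one_le_right (abs_nonneg M) hr1.le)
  have hsq : a * r * r ≤ (b + |M|) * r := by nlinarith
  have : a * r ≤ b + |M| := le_of_mul_le_mul_right hsq (by linarith)
  have : r ≤ (b + |M|) / a := (le_div_iff₀ ha).mpr (by linarith)
  linarith

lemma LowerSemicontinuous.exists_forall_le_of_isCompact {α β : Type*} [TopologicalSpace α]
    [LinearOrder β] {f : α → β} (hf : LowerSemicontinuous f) {a : α}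
    (hK : IsCompact {x | f x ≤ f a}) : ∃ p, ∀ x, f p ≤ f x := by
  obtain ⟨p, -, hp⟩ :=
    LowerSemicontinuousOn.exists_isMinOn ⟨a, le_refl (f a)⟩ hK (hf.lowerSemicontinuousOn _)
  refine ⟨p, fun x => ?_⟩
  by_cases hx : f x ≤ f a
  · exact hp hx
  · exact (hp (le_refl (f a))).trans (not_le.mp hx).le

section ScaledProx

variable {n : ℕ} {B : Matrix (Fin n) (Fin n) ℝ}

lemma quadF_eq_dotProduct (B : Matrix (Fin n) (Fin n) ℝ) (v : Euc n) :
    quadF B v = star (WithLp.ofLp v) ⬝ᵥ (B *ᵥ WithLp.ofLp v) := by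
  rw [quadF, EuclideanSpace.inner_eq_star_dotProduct, dotProduct_comm]; rfl

lemma quadF_nonneg (hB : B.PosSemidef) (v : Euc n) :
    0 ≤ quadF B v := by
  rw [quadF_eq_dotProduct]; exact hB.dotProduct_mulVec_nonneg _

lemma quadF_pos (hB : B.PosDef) {v : Euc n} (hv : v ≠ 0) :
    0 < quadF B v := by
  rw [quadF_eq_dotProduct]; exact hB.dotProduct_mulVec_pos (by simpa using hv)

lemma quadF_add (hB : B.IsHermitian) (a d : Euc n) :
    quadF B (a + d) = quadF B a + 2 * ⟪Matrix.toEuclideanLin B a, d⟫ + quadF B d := by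
  have hsym := Matrix.isSymmetric_toEuclideanLin_iff.mpr hB
  simp only [quadF, map_add, inner_add_left, inner_add_right, ← hsym a d, real_inner_comm d]
  ring

lemma quadF_smul (B : Matrix (Fin n) (Fin n) ℝ) (t : ℝ) (d : Euc n) :
    quadF B (t • d) = t ^ 2 * quadF B d := by
  simp only [quadF, map_smul, inner_smul_left, inner_smul_right, RCLike.conj_to_real]
  ring

lemma toEuclideanLin_smul_one (τ : ℝ) (v : Euc n) :
    Matrix.toEuclideanLin (τ • (1 : Matrix (Fin n) (Fin n) ℝ)) v = τ • v := by
  simp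

lemma quadF_smul_one (τ : ℝ) (v : Euc n) :
    quadF (τ • (1 : Matrix (Fin n) (Fin n) ℝ)) v = τ * ‖v‖ ^ 2 := by
  rw [quadF, toEuclideanLin_smul_one, real_inner_smul_right, real_inner_self_eq_norm_sq]

lemma exists_pos_mul_norm_sq_le_quadF (hB : B.PosDef) :
    ∃ c > 0, ∀ v : Euc n, c * ‖v‖ ^ 2 ≤ quadF B v := by
  rcases subsingleton_or_nontrivial (Euc n) with hsub | hnt
  · exact ⟨1, one_pos, fun v => by simp [Subsingleton.elim v 0, quadF]⟩
  have hcont : Continuous (quadF B) :=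
    continuous_id.inner (Matrix.toEuclideanLin B).continuous_of_finiteDimensional
  obtain ⟨v₀, hv₀, hmin⟩ := (isCompact_sphere (0 : Euc n) 1).exists_isMinOn
    (NormedSpace.sphere_nonempty.mpr zero_le_one) hcont.continuousOn
  have hv₀ne : v₀ ≠ 0 := ne_zero_of_mem_unit_sphere ⟨v₀, hv₀⟩
  refine ⟨quadF B v₀, quadF_pos hB hv₀ne, fun v => ?_⟩
  rcases eq_or_ne v 0 with rfl | hv
  · simp [quadF]
  have hnorm : 0 < ‖v‖ := norm_pos_iff.mpr hv
  have hle : quadF B v₀ ≤ quadF B (‖v‖⁻¹ • v) := hmin (by simp [norm_smul, hnorm.ne'])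
  rw [quadF_smul, inv_pow] at hle
  calc quadF B v₀ * ‖v‖ ^ 2 ≤ (‖v‖ ^ 2)⁻¹ * quadF B v * ‖v‖ ^ 2 := by gcongr
    _ = quadF B v := by field_simp

section

variable {h : Euc n → EReal} {y p : Euc n}

lemma IsScaledProxPt.ne_top (hprop : ProperF h) (hp : IsScaledProxPt B h y p) : h p ≠ ⊤ := by
  obtain ⟨x, hx⟩ := hprop.2
  obtain ⟨r, hr⟩ := EReal.exists_coe_eq (hprop.1 x) hx
  intro htop
  have := hp x
  rw [htop, hr, EReal.top_add_coe, ← EReal.coe_add, top_le_iff] at this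
  exact EReal.coe_ne_top _ this

lemma ESubgradAt.add_quadF_le (hB : B.IsHermitian)
    (hsub : ESubgradAt h (Matrix.toEuclideanLin B (y - p)) p) (w : Euc n) :
    h p + ((quadF B (p - y) / 2 + quadF B (w - p) / 2 : ℝ) : EReal) ≤
      h w + ((quadF B (w - y) / 2 : ℝ) : EReal) := by
  have hexp : quadF B (p - y) / 2 + quadF B (w - p) / 2 =
      ⟪Matrix.toEuclideanLin B (y - p), w - p⟫ + quadF B (w - y) / 2 := by
    rw [show w - y = (p - y) + (w - p) by abel, quadF_add hB,
      show y - p = -(p - y) by abel, map_neg, inner_neg_left]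
    ring
  rw [hexp, EReal.coe_add, ← add_assoc]
  exact add_le_add_left (hsub w) _

lemma ESubgradAt.isScaledProxPt (hB : B.PosSemidef)
    (hsub : ESubgradAt h (Matrix.toEuclideanLin B (y - p)) p) : IsScaledProxPt B h y p := by
  intro w
  refine le_trans (add_le_add_right ?_ _) (hsub.add_quadF_le hB.1 w)
  exact EReal.coe_le_coe_iff.mpr (by linarith [quadF_nonneg hB (w - p)])

lemma IsScaledProxPt.eSubgradAt (hB : B.IsHermitian) (hprop : ProperF h) (hconv : EConvexF h)
    (hp : IsScaledProxPt B h y p) : ESubgradAt h (Matrix.toEuclideanLin B (y - p)) p := by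
  intro w
  rcases eq_or_ne (h w) ⊤ with hw | hw
  · rw [hw]; exact le_top
  obtain ⟨a, ha⟩ := EReal.exists_coe_eq (hprop.1 p) (hp.ne_top hprop)
  obtain ⟨b, hb⟩ := EReal.exists_coe_eq (hprop.1 w) hw
  rw [ha, hb, ← EReal.coe_add, EReal.coe_le_coe_iff]
  have hneg : ⟪Matrix.toEuclideanLin B (y - p), w - p⟫ =
      -⟪Matrix.toEuclideanLin B (p - y), w - p⟫ := by
    rw [show y - p = -(p - y) by abel, map_neg, inner_neg_left]
  suffices a + ⟪Matrix.toEuclideanLin B (y - p), w - p⟫ - b ≤ 0 by linarith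
  -- first-order condition: compare `p` with `p + t • (w - p)` and let `t → 0⁺`
  refine nonpos_of_forall_le_mul (c := quadF B (w - p) / 2) fun t ⟨ht0, ht1⟩ => ?_
  have hseg : h (p + t • (w - p)) ≤ (((1 - t) * a + t * b : ℝ) : EReal) := by
    have := hconv p w (1 - t) t (by linarith) ht0.le (by ring)
    rwa [ha, hb, ← EReal.coe_mul, ← EReal.coe_mul, ← EReal.coe_add,
      show (1 - t) • p + t • w = p + t • (w - p) by module] at this
  have hmin := (hp (p + t • (w - p))).trans (add_le_add_left hseg _)
  rw [ha, ← EReal.coe_add, ← EReal.coe_add, EReal.coe_le_coe_iff,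
    show p + t • (w - p) - y = (p - y) + t • (w - p) by abel, quadF_add hB, quadF_smul,
    inner_smul_right] at hmin
  rw [hneg]
  nlinarith

lemma IsScaledProxPt.unique (hB : B.PosDef) (hprop : ProperF h) (hconv : EConvexF h) {q : Euc n}
    (hp : IsScaledProxPt B h y p) (hq : IsScaledProxPt B h y q) : p = q := by
  obtain ⟨a, ha⟩ := EReal.exists_coe_eq (hprop.1 p) (hp.ne_top hprop)
  obtain ⟨b, hb⟩ := EReal.exists_coe_eq (hprop.1 q) (hq.ne_top hprop)
  have hpq := (hp.eSubgradAt hB.1 hprop hconv).add_quadF_le hB.1 q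
  have hqp := hq p
  rw [ha, hb, ← EReal.coe_add, ← EReal.coe_add, EReal.coe_le_coe_iff] at hpq hqp
  by_contra hne
  linarith [quadF_pos hB (sub_ne_zero.mpr (Ne.symm hne))]

lemma IsProxPt.isScaledProxPt {τ : ℝ} (hτ : 0 < τ)
    (hp : IsProxPt τ h y p) : IsScaledProxPt (τ • (1 : Matrix (Fin n) (Fin n) ℝ)) h y p := by
  intro w
  have key := mul_le_mul_of_nonneg_left (hp w) (EReal.coe_nonneg.mpr hτ.le)
  have hcancel : ∀ x : EReal, (τ : EReal) * ((τ⁻¹ : ℝ) * x) = x := fun x => by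
    rw [← mul_assoc, ← EReal.coe_mul, mul_inv_cancel₀ hτ.ne', EReal.coe_one, one_mul]
  simp only [EReal.left_distrib_of_nonneg_of_ne_top (EReal.coe_nonneg.mpr hτ.le)
    (EReal.coe_ne_top τ), hcancel, ← EReal.coe_mul] at key
  simpa only [quadF_smul_one, mul_div_assoc] using key

lemma exists_isScaledProxPt (hB : B.PosDef) (hprop : ProperF h) (hlsc : LowerSemicontinuous h)
    {v x₀ : Euc n} (hsub : ESubgradAt h v x₀) (y : Euc n) : ∃ p, IsScaledProxPt B h y p := by
  set F : Euc n → EReal := fun w => h w + ((quadF B (w - y) / 2 : ℝ) : EReal) with hFdef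
  have hquad : Continuous fun w => quadF B (w - y) / 2 :=
    ((continuous_sub_right y).inner
      ((Matrix.toEuclideanLin B).continuous_of_finiteDimensional.comp
        (continuous_sub_right y))).div_const 2
  have hF : LowerSemicontinuous F :=
    hlsc.add' (continuous_coe_real_ereal.comp hquad).lowerSemicontinuous fun _ =>
      EReal.continuousAt_add (.inr (EReal.coe_ne_bot _)) (.inr (EReal.coe_ne_top _))
  obtain ⟨x₁, hx₁⟩ := hprop.2
  obtain ⟨r₁, hr₁⟩ := EReal.exists_coe_eq (hprop.1 x₁) hx₁
  obtain ⟨r₀, hr₀⟩ : ∃ r : ℝ, h x₀ = r := by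
    refine EReal.exists_coe_eq (hprop.1 x₀) fun htop => hx₁ ?_
    simpa [htop] using hsub x₁
  obtain ⟨c, hc, hcoer⟩ := exists_pos_mul_norm_sq_le_quadF hB
  set M := r₁ + quadF B (x₁ - y) / 2 - r₀ - ⟪v, y - x₀⟫ with hM
  have hbdd : {w | F w ≤ F x₁} ⊆ Metric.closedBall y (1 + (‖v‖ + |M|) / (c / 2)) := by
    intro w hw
    have hlow : ((r₀ + ⟪v, w - x₀⟫ + quadF B (w - y) / 2 : ℝ) : EReal) ≤ F x₁ := by
      rw [EReal.coe_add, EReal.coe_add, ← hr₀]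
      exact (add_le_add_left (hsub w) _).trans hw
    simp only [hFdef] at hlow
    rw [hr₁, ← EReal.coe_add, EReal.coe_le_coe_iff] at hlow
    have hcs := neg_le_of_abs_le (abs_real_inner_le_norm v (w - y))
    have hsplit : ⟪v, w - x₀⟫ = ⟪v, w - y⟫ + ⟪v, y - x₀⟫ := by
      rw [← inner_add_right]; abel_nf
    rw [Metric.mem_closedBall, dist_eq_norm]
    refine le_one_add_of_mul_sq_le (by positivity) (norm_nonneg v) ?_
    linarith [hcoer (w - y)]
  obtain ⟨p, hp⟩ := hF.exists_forall_le_of_isCompact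
    ((isCompact_closedBall _ _).of_isClosed_subset (hF.isClosed_preimage (F x₁)) hbdd)
  exact ⟨p, hp⟩

end

end ScaledProx

section Lmap

variable {n : ℕ} {τ : ℝ} {u₁ u₂ xb : Euc n}

lemma toEuclideanLin_vecMulVec (a b v : Euc n) :
    Matrix.toEuclideanLin (vecMulVec (WithLp.ofLp a) (WithLp.ofLp b)) v = ⟪b, v⟫ • a := by
  have h := InnerProductSpace.symm_toEuclideanLin_rankOne a b
  rw [LinearEquiv.symm_apply_eq, star_trivial] at h
  rw [← h]
  simp

lemma Amat_apply (τ : ℝ) (u₁ v : Euc n) :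
    Matrix.toEuclideanLin (Amat τ u₁) v = τ • v + ⟪u₁, v⟫ • u₁ := by
  rw [Amat, map_add, LinearMap.add_apply, toEuclideanLin_smul_one, toEuclideanLin_vecMulVec]

lemma Bprox_apply (τ : ℝ) (u₁ u₂ v : Euc n) :
    Matrix.toEuclideanLin (Bprox τ u₁ u₂) v = τ • v + ⟪u₁, v⟫ • u₁ - ⟪u₂, v⟫ • u₂ := by
  rw [Bprox, map_sub, LinearMap.sub_apply, Amat_apply, toEuclideanLin_vecMulVec]

lemma Amat_posDef {τ : ℝ} (hτ : 0 < τ) (u₁ : Euc n) : (Amat τ u₁).PosDef :=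
  (Matrix.PosDef.one.smul hτ).add_posSemidef
    (by simpa using Matrix.posSemidef_vecMulVec_self_star (WithLp.ofLp u₁))

lemma Amat_apply_inv {τ : ℝ} (hτ : 0 < τ) (u₁ v : Euc n) :
    Matrix.toEuclideanLin (Amat τ u₁) (Matrix.toEuclideanLin (Amat τ u₁)⁻¹ v) = v := by
  rw [← LinearMap.comp_apply, ← Matrix.toLpLin_mul_same,
    Matrix.mul_nonsing_inv _ (Amat_posDef hτ u₁).det_pos.ne'.isUnit]
  simp

def alphaOfProx (τ : ℝ) (u₁ u₂ xb q : Euc n) : ℝ × ℝ :=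
  (-⟪u₁, xb + (-⟪u₂, xb - q⟫) • Matrix.toEuclideanLin (Amat τ u₁)⁻¹ u₂ - q⟫, -⟪u₂, xb - q⟫)

lemma Lmap_eq_zero_iff {P : Euc n → Euc n} {α : ℝ × ℝ} :
    Lmap τ u₁ u₂ xb P α = 0 ↔ α = alphaOfProx τ u₁ u₂ xb (P (zetaMap τ u₁ u₂ xb α)) := by
  obtain ⟨α₁, α₂⟩ := α
  simp only [Lmap, alphaOfProx, Prod.ext_iff, Prod.fst_zero, Prod.snd_zero]
  constructor
  · rintro ⟨h₁, h₂⟩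
    have e₂ : α₂ = -⟪u₂, xb - P (zetaMap τ u₁ u₂ xb (α₁, α₂))⟫ := by linarith
    rw [← e₂]
    exact ⟨by linarith, rfl⟩
  · rintro ⟨h₁, h₂⟩
    rw [← h₂] at h₁
    constructor <;> linarith

lemma smul_zetaMap_alphaOfProx_sub (hτ : 0 < τ) (q : Euc n) :
    τ • (zetaMap τ u₁ u₂ xb (alphaOfProx τ u₁ u₂ xb q) - q) =
      Matrix.toEuclideanLin (Bprox τ u₁ u₂) (xb - q) := by
  simp only [zetaMap, alphaOfProx, Bprox_apply]
  set z := Matrix.toEuclideanLin (Amat τ u₁)⁻¹ u₂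
  have hz : τ • z = u₂ - ⟪u₁, z⟫ • u₁ := by
    rw [eq_sub_iff_add_eq, ← Amat_apply, Amat_apply_inv hτ]
  have ha₁ : ⟪u₁, xb + (-⟪u₂, xb - q⟫) • z - q⟫ = ⟪u₁, xb - q⟫ - ⟪u₂, xb - q⟫ * ⟪u₁, z⟫ := by
    rw [show xb + (-⟪u₂, xb - q⟫) • z - q = (xb - q) - ⟪u₂, xb - q⟫ • z by module,
      inner_sub_right, real_inner_smul_right]
  rw [ha₁]
  calc τ • (xb - (-(⟪u₁, xb - q⟫ - ⟪u₂, xb - q⟫ * ⟪u₁, z⟫) / τ) • u₁ + (-⟪u₂, xb - q⟫) • z - q)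
      = τ • (xb - q) + (⟪u₁, xb - q⟫ - ⟪u₂, xb - q⟫ * ⟪u₁, z⟫) • u₁
          - ⟪u₂, xb - q⟫ • (τ • z) := by
        rw [smul_sub, smul_add, smul_sub, smul_smul, smul_smul, mul_div_cancel₀ _ hτ.ne']
        module
    _ = τ • (xb - q) + ⟪u₁, xb - q⟫ • u₁ - ⟪u₂, xb - q⟫ • u₂ := by
        rw [hz]; module

end Lmap

theorem Lmap_unique_root_general
    {n : ℕ} (τ : ℝ) (u₁ u₂ xb : Euc n)
    (h₁ : Euc n → EReal) (P : Euc n → Euc n)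
    (hprop : ProperF h₁) (hlsc : LowerSemicontinuous h₁) (hconv : EConvexF h₁)
    (hτ : 0 < τ)
    (hpd : (Bprox τ u₁ u₂).PosDef)
    (hP : ∀ y : Euc n, IsProxPt τ h₁ y (P y)) :
    ∃! α : ℝ × ℝ, Lmap τ u₁ u₂ xb P α = 0 := by
  have hτ1 : (τ • (1 : Matrix (Fin n) (Fin n) ℝ)).PosDef := Matrix.PosDef.one.smul hτ
  have hprox : ∀ y, IsScaledProxPt (τ • 1) h₁ y (P y) := fun y => (hP y).isScaledProxPt hτ
  have hζ : ∀ q, Matrix.toEuclideanLin (τ • 1) (zetaMap τ u₁ u₂ xb (alphaOfProx τ u₁ u₂ xb q) - q)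
      = Matrix.toEuclideanLin (Bprox τ u₁ u₂) (xb - q) := fun q => by
    rw [toEuclideanLin_smul_one, smul_zetaMap_alphaOfProx_sub hτ]
  obtain ⟨xs, hxs⟩ := exists_isScaledProxPt hpd hprop hlsc
    ((hprox xb).eSubgradAt hτ1.1 hprop hconv) xb
  refine ⟨alphaOfProx τ u₁ u₂ xb xs, ?_, fun α hα => ?_⟩
  · have hPxs : P (zetaMap τ u₁ u₂ xb (alphaOfProx τ u₁ u₂ xb xs)) = xs :=
      (hprox _).unique hτ1 hprop hconv <| ESubgradAt.isScaledProxPt hτ1.posSemidef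
        (by rw [hζ]; exact hxs.eSubgradAt hpd.1 hprop hconv)
    exact Lmap_eq_zero_iff.mpr (by rw [hPxs])
  · replace hα := Lmap_eq_zero_iff.mp hα
    have hq : IsScaledProxPt (Bprox τ u₁ u₂) h₁ xb (P (zetaMap τ u₁ u₂ xb α)) :=
      ESubgradAt.isScaledProxPt hpd.posSemidef
        (by rw [← hζ, ← hα]; exact (hprox _).eSubgradAt hτ1.1 hprop hconv)
    rw [hα, hq.unique hpd hprop hconv hxs]

/-- the system `𝓛(α) = 0` has exactly one solution. -/
theorem Lmap_unique_root
    {n : ℕ} (τ : ℝ) (u₁ u₂ xb : Euc n)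
    (h₁ : Euc n → EReal) (P : Euc n → Euc n)
    (hprop : ProperF h₁) (hlsc : LowerSemicontinuous h₁) (hconv : EConvexF h₁)
    (hτ : 0 < τ)
    (hind : LinearIndependent ℝ ![u₁, u₂])
    (hpd : (Bprox τ u₁ u₂).PosDef)
    (hP : ∀ y : Euc n, IsProxPt τ h₁ y (P y)) :
    ∃! α : ℝ × ℝ, Lmap τ u₁ u₂ xb P α = 0 :=
  Lmap_unique_root_general τ u₁ u₂ xb h₁ P hprop hlsc hconv hτ hpd hP
end
end
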